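/- Let V, W, G be (abelian group)-valued k-functors with V additive, and let π : W → G be an epimorphism (surjective at every commutative k-algebra B). Then every natural transformation of underlying set-valued functors V → G lifts through π to a natural transformation of underlying set-valued functors V → W; that is, the induced map Mor_{k-functors}(V,W) → Mor_{k-functors}(V,G) is surjective, where Mor_{k-functors} denotes natural transformations of the underlying set-valued functors (not required to be additive). -/

import Mathlib

universe u

open TensorProduct

/-- An (abelian group)-valued `k`-functor: a functor from commutative `k`-algebras
(in universe `u`) to abelian groups. -/
structure AbFunctor (k : Type u) [Field k] : Type (u + 1) where
  obj : ∀ (B : Type u) [CommRing B] [Algebra k B], Type u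
  [grp : ∀ (B : Type u) [CommRing B] [Algebra k B], AddCommGroup (obj B)]
  map : ∀ {B C : Type u} [CommRing B] [Algebra k B] [CommRing C] [Algebra k C],
    (B →ₐ[k] C) → (obj B →+ obj C)
  map_id : ∀ (B : Type u) [CommRing B] [Algebra k B],
    map (AlgHom.id k B) = AddMonoidHom.id (obj B)
  map_comp : ∀ {B C D : Type u} [CommRing B] [Algebra k B] [CommRing C] [Algebra k C]
    [CommRing D] [Algebra k D] (f : B →ₐ[k] C) (g : C →ₐ[k] D),
    map (g.comp f) = (map g).comp (map f)

attribute [instance] AbFunctor.grp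

variable (k : Type u) [Field k]

/-- A morphism of (abelian group)-valued `k`-functors. -/
structure AbHom (F G : AbFunctor k) where
  app : ∀ (B : Type u) [CommRing B] [Algebra k B], F.obj B →+ G.obj B
  naturality : ∀ {B C : Type u} [CommRing B] [Algebra k B] [CommRing C] [Algebra k C]
    (f : B →ₐ[k] C) (x : F.obj B), G.map f (app B x) = app C (F.map f x)

/-- A natural transformation of the underlying set-valued functors
(not required to be additive). -/
structure SetHom (F G : AbFunctor k) where
  app : ∀ (B : Type u) [CommRing B] [Algebra k B], F.obj B → G.obj B
  naturality : ∀ {B C : Type u} [CommRing B] [Algebra k B] [CommRing C] [Algebra k C]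
    (f : B →ₐ[k] C) (x : F.obj B), G.map f (app B x) = app C (F.map f x)

/-- An isomorphism of (abelian group)-valued `k`-functors. -/
structure AbIso (F G : AbFunctor k) where
  hom : AbHom k F G
  inv : AbHom k G F
  hom_inv : ∀ (B : Type u) [CommRing B] [Algebra k B] (x : F.obj B),
    inv.app B (hom.app B x) = x
  inv_hom : ∀ (B : Type u) [CommRing B] [Algebra k B] (x : G.obj B),
    hom.app B (inv.app B x) = x
/-- `𝔾_a^ι`, the direct sum of `ι` copies of the additive group functor,
`B ↦ ⊕_{i : ι} (B, +)`. -/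
noncomputable def Ga (ι : Type u) : AbFunctor k where
  obj B _ _ := ι →₀ B
  grp B _ _ := inferInstance
  map f := Finsupp.mapRange.addMonoidHom f.toRingHom.toAddMonoidHom
  map_id B _ _ := by
    ext x i
    simp [Finsupp.mapRange.addMonoidHom]
  map_comp f g := by
    ext x i j
    simp only [AddMonoidHom.coe_comp, Function.comp_apply, Finsupp.mapRange.addMonoidHom_apply,
      Finsupp.mapRange_apply, Finsupp.singleAddHom_apply]
    by_cases h : x = j <;> simp [h, Finsupp.single_apply]
/-- A functor is strictly additive if it is isomorphic to `𝔾_a^α` for some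
`α ∈ {0, 1, …, ∞}`. -/
def IsStrictlyAdditive (F : AbFunctor k) : Prop :=
  (∃ n : ℕ, Nonempty (AbIso k F (Ga k (ULift.{u} (Fin n))))) ∨
    Nonempty (AbIso k F (Ga k (ULift.{u} ℕ)))
/-- `0 → F' → F → F'' → 0` is a short exact sequence of (abelian group)-valued
`k`-functors (exactness is objectwise). -/
structure IsShortExact {F' F F'' : AbFunctor k} (i : AbHom k F' F)
    (p : AbHom k F F'') : Prop where
  inj : ∀ (B : Type u) [CommRing B] [Algebra k B], Function.Injective (i.app B)
  surj : ∀ (B : Type u) [CommRing B] [Algebra k B], Function.Surjective (p.app B)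
  exact : ∀ (B : Type u) [CommRing B] [Algebra k B] (x : F.obj B),
    p.app B x = 0 ↔ x ∈ Set.range (i.app B)
/-- A functor is additive if it admits a finite filtration with strictly additive
successive quotients; equivalently (and as formalized here), the class of additive
functors is the smallest class containing the strictly additive functors and closed
under extensions with strictly additive quotients. -/
inductive IsAdditive : AbFunctor k → Prop
  | of_strict (F : AbFunctor k) : IsStrictlyAdditive k F → IsAdditive F
  | of_ext {F' F F'' : AbFunctor k} (i : AbHom k F' F) (p : AbHom k F F'') :
      IsShortExact k i p → IsAdditive F' → IsStrictlyAdditive k F'' → IsAdditive F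

/-!
A set-valued transformation `t : V × 𝔾ₐ^ι → G` is determined by its values
`t(v, ∑_{i ∈ S} X_i e_i) ∈ G(B[X])` at the generic vectors over finite `S ⊆ ι`, and `t(v, f)` is
recovered by substituting `X ↦ f`. So a lift of `t` can be assembled from lifts for `V` against the
epimorphism `W(-[X]) → G(-[X])`, provided the lifts for an exhausting chain `S₀ ⊆ S₁ ⊆ ⋯` agree
after the truncations `X_i ↦ 0` (`i ∉ S_n`); since truncation is idempotent and commutes with `π`,
each new lift can be corrected to achieve this. An extension `0 → V' → V → V'' → 0` with `V''`
strictly additive splits as a sequence of set-valued functors (`V → V''` has a set-valued section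
by the first step), so `V` is a retract of `V' × V''`, and induction on the filtration concludes.
-/

open MvPolynomial

variable {k}

namespace AbFunctor

theorem map_map (F : AbFunctor k) {B C D : Type u} [CommRing B] [Algebra k B]
    [CommRing C] [Algebra k C] [CommRing D] [Algebra k D]
    (f : B →ₐ[k] C) (g : C →ₐ[k] D) (x : F.obj B) :
    F.map g (F.map f x) = F.map (g.comp f) x := by
  rw [F.map_comp]; rfl

theorem map_id_apply (F : AbFunctor k) {B : Type u} [CommRing B] [Algebra k B]
    (x : F.obj B) : F.map (AlgHom.id k B) x = x := by
  rw [F.map_id]; rfl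

variable (k) in
abbrev zero : AbFunctor k where
  obj _ _ _ := PUnit
  map _ := AddMonoidHom.id PUnit
  map_id _ := rfl
  map_comp _ _ := rfl

abbrev prod (F G : AbFunctor k) : AbFunctor k where
  obj B _ _ := F.obj B × G.obj B
  map f := (F.map f).prodMap (G.map f)
  map_id B _ _ := by ext x <;> simp [map_id_apply]
  map_comp f g := by ext x <;> simp [map_map]

@[simp]
theorem prod_map_apply (F G : AbFunctor k) {B C : Type u} [CommRing B] [Algebra k B]
    [CommRing C] [Algebra k C] (f : B →ₐ[k] C) (x : (F.prod G).obj B) :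
    (F.prod G).map f x = (F.map f x.1, G.map f x.2) := rfl

noncomputable abbrev poly (ι : Type u) (F : AbFunctor k) : AbFunctor k where
  obj B _ _ := F.obj (MvPolynomial ι B)
  map f := F.map (mapAlgHom f)
  map_id B _ _ := by rw [mapAlgHom_id, F.map_id]
  map_comp f g := by
    rw [← F.map_comp]
    exact congrArg F.map (AlgHom.ext fun p => (MvPolynomial.map_map _ _ p).symm)

end AbFunctor

namespace SetHom

variable {F G H : AbFunctor k}

@[simps]
def id (F : AbFunctor k) : SetHom k F F where
  app _ _ _ x := x
  naturality _ _ := rfl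

@[simps]
def comp (b : SetHom k G H) (a : SetHom k F G) : SetHom k F H where
  app B _ _ x := b.app B (a.app B x)
  naturality f x := by rw [b.naturality, a.naturality]

@[simps]
def prod (a : SetHom k F G) (b : SetHom k F H) : SetHom k F (G.prod H) where
  app B _ _ x := (a.app B x, b.app B x)
  naturality f x := by simp [a.naturality, b.naturality]

@[simps]
def fst : SetHom k (F.prod G) F where
  app _ _ _ x := x.1
  naturality _ _ := rfl

@[simps]
def snd : SetHom k (F.prod G) G where
  app _ _ _ x := x.2
  naturality _ _ := rfl

instance : Add (SetHom k F G) where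
  add a b := ⟨fun B _ _ x => a.app B x + b.app B x,
    fun f x => by rw [map_add, a.naturality, b.naturality]⟩

instance : Sub (SetHom k F G) where
  sub a b := ⟨fun B _ _ x => a.app B x - b.app B x,
    fun f x => by rw [map_sub, a.naturality, b.naturality]⟩

@[simp]
theorem add_app (a b : SetHom k F G) (B : Type u) [CommRing B] [Algebra k B] (x : F.obj B) :
    (a + b).app B x = a.app B x + b.app B x := rfl

@[simp]
theorem sub_app (a b : SetHom k F G) (B : Type u) [CommRing B] [Algebra k B] (x : F.obj B) :
    (a - b).app B x = a.app B x - b.app B x := rfl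

end SetHom

@[simps]
def AbHom.toSetHom {F G : AbFunctor k} (f : AbHom k F G) : SetHom k F G where
  app B _ _ := f.app B
  naturality := f.naturality

def SetHom.IsLift {V W G : AbFunctor k} (pi : AbHom k W G) (s : SetHom k V W)
    (t : SetHom k V G) : Prop :=
  ∀ (B : Type u) [CommRing B] [Algebra k B] (x : V.obj B), pi.app B (s.app B x) = t.app B x

def HasSetHomLifts (V : AbFunctor k) : Prop :=
  ∀ ⦃W G : AbFunctor k⦄ (pi : AbHom k W G),
    (∀ (B : Type u) [CommRing B] [Algebra k B], Function.Surjective (pi.app B)) →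
    ∀ t : SetHom k V G, ∃ s : SetHom k V W, SetHom.IsLift pi s t

namespace HasSetHomLifts

theorem of_retract {V U : AbFunctor k} (a : SetHom k V U) (b : SetHom k U V)
    (hba : ∀ (B : Type u) [CommRing B] [Algebra k B] (x : V.obj B), b.app B (a.app B x) = x)
    (hU : HasSetHomLifts U) : HasSetHomLifts V := by
  intro W G pi hpi t
  obtain ⟨s, hs⟩ := hU pi hpi (t.comp b)
  exact ⟨s.comp a, fun B _ _ x => by simp [hs B (a.app B x), hba]⟩

theorem zero : HasSetHomLifts (AbFunctor.zero k) := by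
  intro W G pi hpi t
  obtain ⟨w, hw⟩ := hpi k (t.app k PUnit.unit)
  refine ⟨⟨fun B _ _ _ => W.map (Algebra.ofId k B) w, fun f _ => ?_⟩, fun B _ _ x => ?_⟩
  · rw [AbFunctor.map_map, Subsingleton.elim (f.comp (Algebra.ofId k _)) (Algebra.ofId k _)]
  · rw [← pi.naturality, hw, t.naturality]

end HasSetHomLifts

section Substitution

variable (k) {ι : Type u} {B B' : Type u} [CommRing B] [Algebra k B]
  [CommRing B'] [Algebra k B']

noncomputable def evalAt (f : ι →₀ B) : MvPolynomial ι B →ₐ[k] B :=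
  (aeval f : MvPolynomial ι B →ₐ[B] B).restrictScalars k

variable {k}

@[simp]
theorem evalAt_C (f : ι →₀ B) (b : B) : evalAt k f (C b) = b := by
  simp [evalAt]

@[simp]
theorem evalAt_X (f : ι →₀ B) (i : ι) : evalAt k f (X i) = f i := by
  simp [evalAt]

theorem mapAlgHom_comp_toAlgHom (φ : B →ₐ[k] B') :
    (mapAlgHom φ).comp (IsScalarTower.toAlgHom k B (MvPolynomial ι B)) =
      (IsScalarTower.toAlgHom k B' (MvPolynomial ι B')).comp φ := by
  ext; simp

theorem evalAt_comp_toAlgHom (f : ι →₀ B) :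
    (evalAt k f).comp (IsScalarTower.toAlgHom k B (MvPolynomial ι B)) = AlgHom.id k B := by
  ext; simp

-- `(Ga k ι).obj B'` is `ι →₀ B'` only after unfolding `Ga`, hence the explicit coercion.
theorem ga_map_apply (φ : B →ₐ[k] B') (f : ι →₀ B) (i : ι) :
    DFunLike.coe (F := ι →₀ B') ((Ga k ι).map φ f) i = φ (f i) := rfl

theorem evalAt_ga_map_comp_mapAlgHom (φ : B →ₐ[k] B') (f : (Ga k ι).obj B) :
    (evalAt k ((Ga k ι).map φ f)).comp (mapAlgHom φ) = φ.comp (evalAt k f) := by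
  refine algHom_ext' (AlgHom.ext fun b => ?_) fun i => ?_
  · simpa using (evalAt_C ((Ga k ι).map φ f) (φ b)).trans (congrArg φ (evalAt_C f b)).symm
  · simpa using (evalAt_X ((Ga k ι).map φ f) i).trans (congrArg φ (evalAt_X f i)).symm

variable (k) [DecidableEq ι]

noncomputable def truncate (S : Finset ι) : MvPolynomial ι B →ₐ[k] MvPolynomial ι B :=
  (aeval fun i => if i ∈ S then X i else 0 : MvPolynomial ι B →ₐ[B] _).restrictScalars k

noncomputable def genericVector (S : Finset ι) : ι →₀ MvPolynomial ι B :=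
  Finsupp.indicator S fun i _ => X i

variable {k}

@[simp]
theorem truncate_C (S : Finset ι) (b : B) : truncate k S (C b) = C b := by
  simp [truncate]

@[simp]
theorem truncate_X (S : Finset ι) (i : ι) :
    truncate k S (X i : MvPolynomial ι B) = if i ∈ S then X i else 0 := by
  simp [truncate]

theorem mapAlgHom_comp_truncate (φ : B →ₐ[k] B') (S : Finset ι) :
    (mapAlgHom φ).comp (truncate k S) = (truncate k S).comp (mapAlgHom φ) := by
  refine algHom_ext' (AlgHom.ext fun b => ?_) fun i => ?_
  · simp
  · by_cases hi : i ∈ S <;> simp [hi]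

theorem truncate_comp_truncate (S T : Finset ι) :
    (truncate k S).comp (truncate k T) =
      (truncate k (S ∩ T) : MvPolynomial ι B →ₐ[k] _) := by
  refine algHom_ext' (AlgHom.ext fun b => ?_) fun i => ?_
  · simp
  · by_cases hS : i ∈ S <;> by_cases hT : i ∈ T <;> simp [hS, hT]

theorem truncate_comp_toAlgHom (S : Finset ι) :
    (truncate k S).comp (IsScalarTower.toAlgHom k B (MvPolynomial ι B)) =
      IsScalarTower.toAlgHom k B (MvPolynomial ι B) := by
  ext; simp

theorem evalAt_comp_truncate {f : ι →₀ B} {S : Finset ι} (hf : f.support ⊆ S) :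
    (evalAt k f).comp (truncate k S) = evalAt k f := by
  refine algHom_ext' (AlgHom.ext fun b => ?_) fun i => ?_
  · simp
  · by_cases hi : i ∈ S
    · simp [hi]
    · simp [hi, Finsupp.notMem_support_iff.mp (fun h => hi (hf h))]

theorem ga_map_genericVector_mapAlgHom (φ : B →ₐ[k] B') (S : Finset ι) :
    (Ga k ι).map (mapAlgHom φ) (genericVector S) = genericVector S := by
  refine Finsupp.ext fun i => ?_
  by_cases hi : i ∈ S <;> simp [ga_map_apply, genericVector, Finsupp.indicator_apply, hi]

theorem ga_map_genericVector_truncate (S T : Finset ι) :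
    (Ga k ι).map (truncate k S) (genericVector T : ι →₀ MvPolynomial ι B) =
      genericVector (S ∩ T) := by
  refine Finsupp.ext fun i => ?_
  by_cases hS : i ∈ S <;> by_cases hT : i ∈ T <;>
    simp [ga_map_apply, genericVector, Finsupp.indicator_apply, hS, hT]

theorem ga_map_genericVector_evalAt {f : ι →₀ B} {S : Finset ι} (hf : f.support ⊆ S) :
    (Ga k ι).map (evalAt k f) (genericVector S) = f := by
  refine Finsupp.ext fun i => ?_
  by_cases hi : i ∈ S
  · simp [ga_map_apply, genericVector, Finsupp.indicator_apply, hi]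
  · simp [ga_map_apply, genericVector, Finsupp.indicator_apply, hi,
      Finsupp.notMem_support_iff.mp (fun h => hi (hf h))]

end Substitution

section GenericLifts

variable {ι : Type u} {V W G : AbFunctor k}

noncomputable def AbHom.poly (pi : AbHom k W G) : AbHom k (W.poly ι) (G.poly ι) where
  app B _ _ := pi.app (MvPolynomial ι B)
  naturality f x := pi.naturality (mapAlgHom f) x

variable [DecidableEq ι]

noncomputable def truncateHom (F : AbFunctor k) (S : Finset ι) :
    AbHom k (F.poly ι) (F.poly ι) where
  app B _ _ := F.map (truncate k S)
  naturality f x := by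
    simp only [AbFunctor.map_map, mapAlgHom_comp_truncate]

noncomputable def genericEval (t : SetHom k (V.prod (Ga k ι)) G) (S : Finset ι) :
    SetHom k V (G.poly ι) where
  app B _ _ v := t.app (MvPolynomial ι B)
    (V.map (IsScalarTower.toAlgHom k B (MvPolynomial ι B)) v, genericVector S)
  naturality f v := by
    change G.map (mapAlgHom f) _ = _
    rw [t.naturality, AbFunctor.prod_map_apply, AbFunctor.map_map, mapAlgHom_comp_toAlgHom,
      ← AbFunctor.map_map, ga_map_genericVector_mapAlgHom]

theorem map_truncate_genericEval (t : SetHom k (V.prod (Ga k ι)) G) (S T : Finset ι)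
    (B : Type u) [CommRing B] [Algebra k B] (v : V.obj B) :
    G.map (truncate k S) ((genericEval t T).app B v) = (genericEval t (S ∩ T)).app B v := by
  change G.map _ (t.app _ _) = t.app _ _
  rw [t.naturality, AbFunctor.prod_map_apply, AbFunctor.map_map, truncate_comp_toAlgHom,
    ga_map_genericVector_truncate]

theorem map_evalAt_genericEval (t : SetHom k (V.prod (Ga k ι)) G) {S : Finset ι}
    {B : Type u} [CommRing B] [Algebra k B] {f : ι →₀ B} (hf : f.support ⊆ S) (v : V.obj B) :
    G.map (evalAt k f) ((genericEval t S).app B v) = t.app B (v, f) := by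
  change G.map _ (t.app _ _) = _
  rw [t.naturality, AbFunctor.prod_map_apply, AbFunctor.map_map, evalAt_comp_toAlgHom,
    AbFunctor.map_id_apply, ga_map_genericVector_evalAt hf]

variable {pi : AbHom k W G}

theorem exists_isLift_genericEval_truncate_eq (hV : HasSetHomLifts V)
    (hpi : ∀ (B : Type u) [CommRing B] [Algebra k B], Function.Surjective (pi.app B))
    (t : SetHom k (V.prod (Ga k ι)) G) {S T : Finset ι} (hST : S ⊆ T)
    {σ : SetHom k V (W.poly ι)} (hσ : SetHom.IsLift pi.poly σ (genericEval t S)) :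
    ∃ σ' : SetHom k V (W.poly ι), SetHom.IsLift pi.poly σ' (genericEval t T) ∧
      ∀ (B : Type u) [CommRing B] [Algebra k B] (v : V.obj B),
        W.map (truncate k S) (σ'.app B v) = W.map (truncate k S) (σ.app B v) := by
  obtain ⟨ρ, hρ⟩ := hV pi.poly (fun B _ _ => hpi _) (genericEval t T)
  refine ⟨ρ - (truncateHom W S).toSetHom.comp (ρ - σ), fun B _ _ v => ?_, fun B _ _ v => ?_⟩
  · have hρv : pi.app _ (ρ.app B v) = _ := hρ B v
    have hσv : pi.app _ (σ.app B v) = _ := hσ B v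
    change pi.app _ (ρ.app B v - W.map (truncate k S) (ρ.app B v - σ.app B v)) = _
    rw [map_sub, ← pi.naturality, map_sub, hρv, hσv, map_sub, map_truncate_genericEval,
      map_truncate_genericEval, Finset.inter_eq_left.mpr hST, Finset.inter_self, sub_self,
      sub_zero]
  · change W.map _ (_ - W.map _ (_ - _)) = _
    rw [map_sub, AbFunctor.map_map, truncate_comp_truncate, Finset.inter_self, map_sub,
      sub_sub_cancel]

theorem exists_isLift_genericEval_seq (hV : HasSetHomLifts V)
    (hpi : ∀ (B : Type u) [CommRing B] [Algebra k B], Function.Surjective (pi.app B))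
    (t : SetHom k (V.prod (Ga k ι)) G) {S : ℕ → Finset ι} (hS : Monotone S) :
    ∃ σ : ℕ → SetHom k V (W.poly ι),
      (∀ n, SetHom.IsLift pi.poly (σ n) (genericEval t (S n))) ∧
      ∀ n (B : Type u) [CommRing B] [Algebra k B] (v : V.obj B),
        W.map (truncate k (S n)) ((σ (n + 1)).app B v) =
          W.map (truncate k (S n)) ((σ n).app B v) := by
  obtain ⟨σ₀, hσ₀⟩ := hV pi.poly (fun B _ _ => hpi _) (genericEval t (S 0))
  choose! next hnext_lift hnext_trunc using fun n (σ : SetHom k V (W.poly ι))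
    (hσ : SetHom.IsLift pi.poly σ (genericEval t (S n))) =>
    exists_isLift_genericEval_truncate_eq hV hpi t (hS n.le_succ) hσ
  let σ : ℕ → SetHom k V (W.poly ι) := fun n => Nat.rec σ₀ next n
  have hσ : ∀ n, SetHom.IsLift pi.poly (σ n) (genericEval t (S n)) := by
    intro n
    induction n with
    | zero => exact hσ₀
    | succ n ih => exact hnext_lift n (σ n) ih
  exact ⟨σ, hσ, fun n => hnext_trunc n (σ n) (hσ n)⟩

theorem map_evalAt_eq_of_truncate_eq {S : ℕ → Finset ι} (hS : Monotone S)
    {σ : ℕ → SetHom k V (W.poly ι)}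
    (hσ : ∀ n (B : Type u) [CommRing B] [Algebra k B] (v : V.obj B),
      W.map (truncate k (S n)) ((σ (n + 1)).app B v) =
        W.map (truncate k (S n)) ((σ n).app B v))
    {B : Type u} [CommRing B] [Algebra k B] {f : ι →₀ B} {n m : ℕ} (hn : f.support ⊆ S n)
    (hm : f.support ⊆ S m) (v : V.obj B) :
    W.map (evalAt k f) ((σ n).app B v) = W.map (evalAt k f) ((σ m).app B v) := by
  suffices key : ∀ n m, n ≤ m → f.support ⊆ S n →
      W.map (evalAt k f) ((σ m).app B v) = W.map (evalAt k f) ((σ n).app B v) by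
    rcases le_total n m with h | h
    exacts [(key n m h hn).symm, key m n h hm]
  intro n m hnm hn
  induction m, hnm using Nat.le_induction with
  | base => rfl
  | succ m hnm ih =>
    have hfm : (evalAt k f).comp (truncate k (S m)) = evalAt k f :=
      evalAt_comp_truncate (hn.trans (hS hnm))
    rw [← hfm, ← AbFunctor.map_map, hσ, AbFunctor.map_map, hfm, ih]

end GenericLifts

theorem HasSetHomLifts.prod_ga {V : AbFunctor k} {ι : Type u} [Countable ι]
    (hV : HasSetHomLifts V) : HasSetHomLifts (V.prod (Ga k ι)) := by
  classical
  intro W G pi hpi t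
  obtain ⟨S, hS, hS_top⟩ := Filter.exists_seq_monotone_tendsto_atTop_atTop (Finset ι)
  choose N hN using fun T : Finset ι => (hS_top.eventually_ge_atTop T).exists
  obtain ⟨σ, hσ_lift, hσ_trunc⟩ := exists_isLift_genericEval_seq hV hpi t hS
  refine ⟨⟨fun B _ _ x => W.map (evalAt k x.2) ((σ (N x.2.support)).app B x.1), ?_⟩, ?_⟩
  · intro B C _ _ _ _ φ x
    have hsupp : ((Ga k ι).map φ x.2 : ι →₀ C).support ⊆ S (N x.2.support) :=
      (Finsupp.support_mapRange (hf := φ.map_zero)).trans (hN _)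
    change W.map φ _ = W.map _ _
    rw [AbFunctor.map_map, ← evalAt_ga_map_comp_mapAlgHom, ← AbFunctor.map_map]
    have hσφ : W.map (mapAlgHom φ) ((σ (N x.2.support)).app B x.1) =
        (σ (N x.2.support)).app C (V.map φ x.1) := (σ _).naturality φ x.1
    rw [hσφ]
    exact map_evalAt_eq_of_truncate_eq hS hσ_trunc hsupp (hN _) _
  · intro B _ _ x
    have hσv : pi.app _ ((σ (N x.2.support)).app B x.1) = _ := hσ_lift _ B x.1
    change pi.app B (W.map _ _) = _
    rw [← pi.naturality, hσv]
    exact map_evalAt_genericEval t (hN _) x.1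

namespace HasSetHomLifts

variable {V F : AbFunctor k}

theorem prod_of_isStrictlyAdditive (hV : HasSetHomLifts V) (hF : IsStrictlyAdditive k F) :
    HasSetHomLifts (V.prod F) := by
  have of_iso {ι : Type u} [Countable ι] (e : AbIso k F (Ga k ι)) : HasSetHomLifts (V.prod F) :=
    hV.prod_ga.of_retract (SetHom.fst.prod (e.hom.toSetHom.comp SetHom.snd))
      (SetHom.fst.prod (e.inv.toSetHom.comp SetHom.snd)) fun B _ _ x => by simp [e.hom_inv]
  rcases hF with ⟨n, ⟨e⟩⟩ | ⟨⟨e⟩⟩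
  exacts [of_iso e, of_iso e]

theorem of_isStrictlyAdditive (hF : IsStrictlyAdditive k F) : HasSetHomLifts F :=
  (zero.prod_of_isStrictlyAdditive hF).of_retract
    ((⟨fun _ _ _ _ => PUnit.unit, fun _ _ => rfl⟩ : SetHom k F (AbFunctor.zero k)).prod
      (SetHom.id F)) SetHom.snd fun _ _ _ _ => rfl

end HasSetHomLifts

theorem IsShortExact.exists_retraction {F' F F'' : AbFunctor k} {i : AbHom k F' F}
    {p : AbHom k F F''} (h : IsShortExact k i p) {s : SetHom k F'' F}
    (hs : SetHom.IsLift p s (SetHom.id F'')) :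
    ∃ r : SetHom k F F', ∀ (B : Type u) [CommRing B] [Algebra k B] (x : F.obj B),
      i.app B (r.app B x) = x - s.app B (p.app B x) := by
  have hker (B : Type u) [CommRing B] [Algebra k B] (x : F.obj B) :
      ∃ v, i.app B v = x - s.app B (p.app B x) :=
    (h.exact B _).mp (by rw [map_sub, hs, SetHom.id_app, sub_self])
  choose r hr using hker
  refine ⟨⟨r, fun f x => h.inj _ ?_⟩, hr⟩
  rw [← i.naturality, hr, hr, map_sub, ← p.naturality, ← s.naturality]

theorem HasSetHomLifts.of_isShortExact {F' F F'' : AbFunctor k} {i : AbHom k F' F}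
    {p : AbHom k F F''} (h : IsShortExact k i p) (h' : HasSetHomLifts F')
    (h'' : IsStrictlyAdditive k F'') : HasSetHomLifts F := by
  obtain ⟨s, hs⟩ := of_isStrictlyAdditive h'' p h.surj (SetHom.id F'')
  obtain ⟨r, hr⟩ := h.exists_retraction hs
  exact (h'.prod_of_isStrictlyAdditive h'').of_retract (r.prod p.toSetHom)
    (i.toSetHom.comp SetHom.fst + s.comp SetHom.snd) fun B _ _ x => by simp [hr]

theorem IsAdditive.hasSetHomLifts {V : AbFunctor k} (hV : IsAdditive k V) :
    HasSetHomLifts V := by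
  induction hV with
  | of_strict F hF => exact .of_isStrictlyAdditive hF
  | of_ext i p h _ hF'' ih => exact .of_isShortExact h ih hF''

/-- If `V` is additive and `π : W → G` is an epimorphism, then every
natural transformation of underlying set-valued functors `V → G` lifts through `π`. -/
theorem additive_lift_setHom {k : Type u} [Field k] {V W G : AbFunctor k}
    (hV : IsAdditive k V) (pi : AbHom k W G)
    (hsurj : ∀ (B : Type u) [CommRing B] [Algebra k B], Function.Surjective (pi.app B))
    (t : SetHom k V G) :
    ∃ s : SetHom k V W, ∀ (B : Type u) [CommRing B] [Algebra k B] (x : V.obj B),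
      pi.app B (s.app B x) = t.app B x :=
  hV.hasSetHomLifts pi hsurj t
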